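/- Let 𝓙 = [[𝓙₁,𝓙₂],[𝓙₃,𝓙₄]] and 𝓙' = [[𝓙₁,𝓙₂'],[𝓙₃,𝓙₄]] be two generalized complex structures on a finite-dimensional real vector space V that differ only in their (1,2)-block. Then there exists a skew-symmetric linear map β : V* → V such that 𝓑' 𝓙 𝓑'⁻¹ = 𝓙', where 𝓑' = [[1,β],[0,1]]; moreover, β is unique subject to the additional constraint that 𝓙₁ ∘ β : V* → V is skew-symmetric. -/

import Mathlib

open Module LinearMap

noncomputable def gcPair (V : Type*) [AddCommGroup V] [Module ℝ V]
    (x y : V × Module.Dual ℝ V) : ℝ :=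
  -(1/2) * (x.2 y.1 + y.2 x.1)

noncomputable def IsGCS (V : Type*) [AddCommGroup V] [Module ℝ V]
    (J : (V × Module.Dual ℝ V) →ₗ[ℝ] (V × Module.Dual ℝ V)) : Prop :=
  J ∘ₗ J = -LinearMap.id ∧ ∀ x y, gcPair V (J x) (J y) = gcPair V x y

section Blocks

variable (V : Type*) [AddCommGroup V] [Module ℝ V]

noncomputable def blk1 (J : (V × Module.Dual ℝ V) →ₗ[ℝ] (V × Module.Dual ℝ V)) :
    V →ₗ[ℝ] V :=
  (LinearMap.fst ℝ V (Module.Dual ℝ V)) ∘ₗ J ∘ₗ (LinearMap.inl ℝ V (Module.Dual ℝ V))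

noncomputable def blk2 (J : (V × Module.Dual ℝ V) →ₗ[ℝ] (V × Module.Dual ℝ V)) :
    Module.Dual ℝ V →ₗ[ℝ] V :=
  (LinearMap.fst ℝ V (Module.Dual ℝ V)) ∘ₗ J ∘ₗ (LinearMap.inr ℝ V (Module.Dual ℝ V))

noncomputable def blk3 (J : (V × Module.Dual ℝ V) →ₗ[ℝ] (V × Module.Dual ℝ V)) :
    V →ₗ[ℝ] Module.Dual ℝ V :=
  (LinearMap.snd ℝ V (Module.Dual ℝ V)) ∘ₗ J ∘ₗ (LinearMap.inl ℝ V (Module.Dual ℝ V))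

noncomputable def blk4 (J : (V × Module.Dual ℝ V) →ₗ[ℝ] (V × Module.Dual ℝ V)) :
    Module.Dual ℝ V →ₗ[ℝ] Module.Dual ℝ V :=
  (LinearMap.snd ℝ V (Module.Dual ℝ V)) ∘ₗ J ∘ₗ (LinearMap.inr ℝ V (Module.Dual ℝ V))

/-- The endomorphism of `V ⊕ V*` with block matrix `[[A,B],[C,D]]`. -/
noncomputable def ofBlocks (A : V →ₗ[ℝ] V) (B : Module.Dual ℝ V →ₗ[ℝ] V)
    (C : V →ₗ[ℝ] Module.Dual ℝ V) (D : Module.Dual ℝ V →ₗ[ℝ] Module.Dual ℝ V) :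
    (V × Module.Dual ℝ V) →ₗ[ℝ] (V × Module.Dual ℝ V) :=
  LinearMap.prod
    (A ∘ₗ LinearMap.fst ℝ V (Module.Dual ℝ V) + B ∘ₗ LinearMap.snd ℝ V (Module.Dual ℝ V))
    (C ∘ₗ LinearMap.fst ℝ V (Module.Dual ℝ V) + D ∘ₗ LinearMap.snd ℝ V (Module.Dual ℝ V))

/-- Skew-symmetry for a map `V → V*`. -/
def SkewF (B : V →ₗ[ℝ] Module.Dual ℝ V) : Prop := ∀ u v : V, B u v = -(B v u)

/-- Skew-symmetry for a map `V* → V`. -/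
def SkewB (β : Module.Dual ℝ V →ₗ[ℝ] V) : Prop :=
  ∀ f g : Module.Dual ℝ V, f (β g) = -(g (β f))

/-- The B-field automorphism `[[1,0],[B,1]]`. -/
noncomputable def calB (B : V →ₗ[ℝ] Module.Dual ℝ V) :
    (V × Module.Dual ℝ V) →ₗ[ℝ] (V × Module.Dual ℝ V) :=
  ofBlocks V LinearMap.id 0 B LinearMap.id

/-- The β-field automorphism `[[1,β],[0,1]]`. -/
noncomputable def calBeta (β : Module.Dual ℝ V →ₗ[ℝ] V) :
    (V × Module.Dual ℝ V) →ₗ[ℝ] (V × Module.Dual ℝ V) :=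
  ofBlocks V LinearMap.id β 0 LinearMap.id

/-- A GCS is complex if it equals `[[J,0],[0,-J*]]` for a complex structure `J` on `V`. -/
noncomputable def IsComplexGCS (J : (V × Module.Dual ℝ V) →ₗ[ℝ] (V × Module.Dual ℝ V)) :
    Prop :=
  ∃ Jc : V →ₗ[ℝ] V, Jc ∘ₗ Jc = -LinearMap.id ∧
    J = ofBlocks V Jc 0 0 (-(Jc.dualMap))

/-- A GCS is symplectic if it equals `[[0,-ω⁻¹],[ω,0]]` for a nondegenerate
skew-symmetric `ω : V → V*`. -/
noncomputable def IsSymplecticGCS (J : (V × Module.Dual ℝ V) →ₗ[ℝ] (V × Module.Dual ℝ V)) :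
    Prop :=
  ∃ (ω : V →ₗ[ℝ] Module.Dual ℝ V) (ω' : Module.Dual ℝ V →ₗ[ℝ] V),
    SkewF V ω ∧ ω' ∘ₗ ω = LinearMap.id ∧ ω ∘ₗ ω' = LinearMap.id ∧
      J = ofBlocks V 0 (-ω') ω 0

/-- B-field transform of a complex GCS. -/
noncomputable def IsBComplex (J : (V × Module.Dual ℝ V) →ₗ[ℝ] (V × Module.Dual ℝ V)) :
    Prop :=
  ∃ B : V →ₗ[ℝ] Module.Dual ℝ V, SkewF V B ∧
    ∃ J₀, IsComplexGCS V J₀ ∧ J = calB V B ∘ₗ J₀ ∘ₗ calB V (-B)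

/-- β-field transform of a complex GCS. -/
noncomputable def IsBetaComplex (J : (V × Module.Dual ℝ V) →ₗ[ℝ] (V × Module.Dual ℝ V)) :
    Prop :=
  ∃ β : Module.Dual ℝ V →ₗ[ℝ] V, SkewB V β ∧
    ∃ J₀, IsComplexGCS V J₀ ∧ J = calBeta V β ∘ₗ J₀ ∘ₗ calBeta V (-β)

/-- B-field transform of a symplectic GCS. -/
noncomputable def IsBSymplectic (J : (V × Module.Dual ℝ V) →ₗ[ℝ] (V × Module.Dual ℝ V)) :
    Prop :=
  ∃ B : V →ₗ[ℝ] Module.Dual ℝ V, SkewF V B ∧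
    ∃ J₀, IsSymplecticGCS V J₀ ∧ J = calB V B ∘ₗ J₀ ∘ₗ calB V (-B)

/-- β-field transform of a symplectic GCS. -/
noncomputable def IsBetaSymplectic (J : (V × Module.Dual ℝ V) →ₗ[ℝ] (V × Module.Dual ℝ V)) :
    Prop :=
  ∃ β : Module.Dual ℝ V →ₗ[ℝ] V, SkewB V β ∧
    ∃ J₀, IsSymplecticGCS V J₀ ∧ J = calBeta V β ∘ₗ J₀ ∘ₗ calBeta V (-β)

end Blocks

/-! Writing `δ = 𝓙₂' - 𝓙₂`, the β-transform of `𝓙` equals `𝓙'` iff `β𝓙₃ = 0`, `𝓙₃β = 0` and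
`β𝓙₄ - 𝓙₁β = δ`. Comparing the block equations of `𝓙² = -1` and `𝓙'² = -1` gives `δ𝓙₃ = 0`,
`𝓙₃δ = 0` and `𝓙₁δ = δ𝓙₁*`, while compatibility with the pairing gives `𝓙₄ = -𝓙₁*` and
skew-symmetry of `δ`. Then `β = ½ δ𝓙₁*` works, because `δ𝓙₁*𝓙₁* = δ(-1 - 𝓙₃𝓙₂) = -δ`, and
`𝓙₁β = -½ δ` is skew. The difference `γ` of two solutions satisfies `𝓙₁γ = -γ𝓙₁*`, which makes
`𝓙₁γ` symmetric; being also skew, it vanishes, and then `γ = -(𝓙₁² + 𝓙₂𝓙₃)γ = 0`. -/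

section BlockAlgebra

variable {V : Type*} [AddCommGroup V] [Module ℝ V]

theorem ofBlocks_apply (A : V →ₗ[ℝ] V) (B : Dual ℝ V →ₗ[ℝ] V) (C : V →ₗ[ℝ] Dual ℝ V)
    (D : Dual ℝ V →ₗ[ℝ] Dual ℝ V) (x : V × Dual ℝ V) :
    ofBlocks V A B C D x = (A x.1 + B x.2, C x.1 + D x.2) := rfl

theorem ofBlocks_blk (J : (V × Dual ℝ V) →ₗ[ℝ] (V × Dual ℝ V)) :
    ofBlocks V (blk1 V J) (blk2 V J) (blk3 V J) (blk4 V J) = J := by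
  refine LinearMap.ext fun x => ?_
  simp only [ofBlocks_apply, blk1, blk2, blk3, blk4, comp_apply, fst_apply, snd_apply, inl_apply,
    inr_apply, ← Prod.fst_add, ← Prod.snd_add, ← map_add, Prod.mk_add_mk, add_zero, zero_add]

theorem ofBlocks_inj {A A' : V →ₗ[ℝ] V} {B B' : Dual ℝ V →ₗ[ℝ] V} {C C' : V →ₗ[ℝ] Dual ℝ V}
    {D D' : Dual ℝ V →ₗ[ℝ] Dual ℝ V} :
    ofBlocks V A B C D = ofBlocks V A' B' C' D' ↔ A = A' ∧ B = B' ∧ C = C' ∧ D = D' := by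
  refine ⟨fun h => ?_, by rintro ⟨rfl, rfl, rfl, rfl⟩; rfl⟩
  have h1 := fun v => congr_arg Prod.fst (LinearMap.congr_fun h (v, 0))
  have h2 := fun f => congr_arg Prod.fst (LinearMap.congr_fun h (0, f))
  have h3 := fun v => congr_arg Prod.snd (LinearMap.congr_fun h (v, 0))
  have h4 := fun f => congr_arg Prod.snd (LinearMap.congr_fun h (0, f))
  simp only [ofBlocks_apply, map_zero, add_zero, zero_add] at h1 h2 h3 h4
  exact ⟨LinearMap.ext h1, LinearMap.ext h2, LinearMap.ext h3, LinearMap.ext h4⟩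

theorem ofBlocks_comp_ofBlocks (A A' : V →ₗ[ℝ] V) (B B' : Dual ℝ V →ₗ[ℝ] V)
    (C C' : V →ₗ[ℝ] Dual ℝ V) (D D' : Dual ℝ V →ₗ[ℝ] Dual ℝ V) :
    ofBlocks V A B C D ∘ₗ ofBlocks V A' B' C' D' =
      ofBlocks V (A ∘ₗ A' + B ∘ₗ C') (A ∘ₗ B' + B ∘ₗ D') (C ∘ₗ A' + D ∘ₗ C')
        (C ∘ₗ B' + D ∘ₗ D') := by
  refine LinearMap.ext fun x => Prod.ext ?_ ?_ <;>
    simp only [comp_apply, ofBlocks_apply, LinearMap.add_apply, map_add] <;> abel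

theorem ofBlocks_neg_id :
    ofBlocks V (-LinearMap.id) 0 0 (-LinearMap.id) = -LinearMap.id := by
  refine LinearMap.ext fun x => ?_
  simp [ofBlocks_apply, Prod.ext_iff]

theorem calBeta_comp_ofBlocks_comp_calBeta_neg (β : Dual ℝ V →ₗ[ℝ] V) (A : V →ₗ[ℝ] V)
    (B : Dual ℝ V →ₗ[ℝ] V) (C : V →ₗ[ℝ] Dual ℝ V) (D : Dual ℝ V →ₗ[ℝ] Dual ℝ V) :
    calBeta V β ∘ₗ ofBlocks V A B C D ∘ₗ calBeta V (-β) =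
      ofBlocks V (A + β ∘ₗ C) (B + β ∘ₗ D - A ∘ₗ β - β ∘ₗ C ∘ₗ β) C (D - C ∘ₗ β) := by
  refine LinearMap.ext fun x => Prod.ext ?_ ?_ <;>
    simp only [calBeta, comp_apply, ofBlocks_apply, LinearMap.add_apply, LinearMap.sub_apply,
      LinearMap.neg_apply, id_apply, LinearMap.zero_apply, map_add, map_neg, map_zero] <;> abel

theorem calBeta_comp_comp_calBeta_neg_eq_iff {J J' : (V × Dual ℝ V) →ₗ[ℝ] (V × Dual ℝ V)}
    (h1 : blk1 V J = blk1 V J') (h3 : blk3 V J = blk3 V J') (h4 : blk4 V J = blk4 V J')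
    (β : Dual ℝ V →ₗ[ℝ] V) :
    calBeta V β ∘ₗ J ∘ₗ calBeta V (-β) = J' ↔
      β ∘ₗ blk3 V J = 0 ∧ blk3 V J ∘ₗ β = 0 ∧
        β ∘ₗ blk4 V J - blk1 V J ∘ₗ β = blk2 V J' - blk2 V J := by
  conv_lhs => rw [← ofBlocks_blk J, ← ofBlocks_blk J', calBeta_comp_ofBlocks_comp_calBeta_neg,
    ← h1, ← h3, ← h4, ofBlocks_inj]
  simp only [add_eq_left, true_and]
  constructor
  · rintro ⟨hβC, h2, hD⟩
    have hCβ : blk3 V J ∘ₗ β = 0 := by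
      rw [← sub_sub_cancel (blk4 V J) (blk3 V J ∘ₗ β), hD, sub_self]
    rw [hCβ, comp_zero, sub_zero] at h2
    exact ⟨hβC, hCβ, by rw [← h2]; abel⟩
  · rintro ⟨hβC, hCβ, h2⟩
    refine ⟨hβC, ?_, by rw [hCβ]; abel⟩
    rw [hCβ, comp_zero, sub_zero, add_sub_assoc, h2]
    abel

end BlockAlgebra

namespace SkewB

variable {V : Type*} [AddCommGroup V] [Module ℝ V] {β γ : Dual ℝ V →ₗ[ℝ] V}

theorem sub (hβ : SkewB V β) (hγ : SkewB V γ) : SkewB V (β - γ) := fun f g => by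
  simp only [LinearMap.sub_apply, map_sub, hβ f g, hγ f g]
  abel

theorem smul (hβ : SkewB V β) (c : ℝ) : SkewB V (c • β) := fun f g => by
  simp only [LinearMap.smul_apply, map_smul, hβ f g, smul_eq_mul, mul_neg]

theorem comp_dualMap {A : V →ₗ[ℝ] V} (hβ : SkewB V β) (hAβ : A ∘ₗ β = β ∘ₗ A.dualMap) :
    SkewB V (β ∘ₗ A.dualMap) := fun f g =>
  calc f (β (A.dualMap g)) = -g ((A ∘ₗ β) f) := hβ f _
    _ = -g (β (A.dualMap f)) := by rw [hAβ]; rfl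

end SkewB

namespace IsGCS

variable {V : Type*} [AddCommGroup V] [Module ℝ V] {J J' : (V × Dual ℝ V) →ₗ[ℝ] (V × Dual ℝ V)}

theorem blk_comp_blk (hJ : IsGCS V J) :
    blk1 V J ∘ₗ blk1 V J + blk2 V J ∘ₗ blk3 V J = -LinearMap.id ∧
      blk1 V J ∘ₗ blk2 V J + blk2 V J ∘ₗ blk4 V J = 0 ∧
      blk3 V J ∘ₗ blk1 V J + blk4 V J ∘ₗ blk3 V J = 0 ∧
      blk3 V J ∘ₗ blk2 V J + blk4 V J ∘ₗ blk4 V J = -LinearMap.id := by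
  have h := hJ.1
  rwa [← ofBlocks_blk J, ofBlocks_comp_ofBlocks, ← ofBlocks_neg_id, ofBlocks_inj] at h

theorem gcPair_map_left (hJ : IsGCS V J) (x y : V × Dual ℝ V) :
    gcPair V (J x) y = -gcPair V x (J y) := by
  have hy : J (J y) = -y := by simpa using LinearMap.congr_fun hJ.1 y
  have h := hJ.2 x (J y)
  rw [hy] at h
  simp only [gcPair, Prod.fst_neg, Prod.snd_neg, map_neg, LinearMap.neg_apply] at h ⊢
  linarith

theorem blk4_eq_neg_dualMap (hJ : IsGCS V J) : blk4 V J = -(blk1 V J).dualMap := by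
  ext g v
  have h := hJ.gcPair_map_left (v, 0) (0, g)
  rw [← ofBlocks_blk J] at h
  simp only [gcPair, ofBlocks_apply, map_zero, add_zero, zero_add, LinearMap.zero_apply] at h
  simp only [LinearMap.neg_apply, dualMap_apply]
  linarith

theorem skewB_blk2 (hJ : IsGCS V J) : SkewB V (blk2 V J) := fun f g => by
  have h := hJ.gcPair_map_left (0, f) (0, g)
  rw [← ofBlocks_blk J] at h
  simp only [gcPair, ofBlocks_apply, map_zero, zero_add] at h
  linarith

theorem blk2_sub_comp_blk3 (hJ : IsGCS V J) (hJ' : IsGCS V J') (h1 : blk1 V J = blk1 V J')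
    (h3 : blk3 V J = blk3 V J') : (blk2 V J' - blk2 V J) ∘ₗ blk3 V J = 0 := by
  have h := hJ'.blk_comp_blk.1
  rw [← h1, ← h3] at h
  rw [sub_comp]
  linear_combination (norm := module) h - hJ.blk_comp_blk.1

theorem blk3_comp_blk2_sub (hJ : IsGCS V J) (hJ' : IsGCS V J') (h3 : blk3 V J = blk3 V J')
    (h4 : blk4 V J = blk4 V J') : blk3 V J ∘ₗ (blk2 V J' - blk2 V J) = 0 := by
  have h := hJ'.blk_comp_blk.2.2.2
  rw [← h3, ← h4] at h
  rw [comp_sub, ← add_sub_add_right_eq_sub _ _ (blk4 V J ∘ₗ blk4 V J), h,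
    hJ.blk_comp_blk.2.2.2, sub_self]

theorem blk1_comp_blk2_sub (hJ : IsGCS V J) (hJ' : IsGCS V J') (h1 : blk1 V J = blk1 V J')
    (h4 : blk4 V J = blk4 V J') :
    blk1 V J ∘ₗ (blk2 V J' - blk2 V J) = (blk2 V J' - blk2 V J) ∘ₗ (blk1 V J).dualMap := by
  have h' := hJ'.blk_comp_blk.2.1
  have h := hJ.blk_comp_blk.2.1
  rw [← h1, ← h4] at h'
  rw [hJ.blk4_eq_neg_dualMap, comp_neg] at h h'
  rw [comp_sub, sub_comp]
  linear_combination (norm := module) h' - h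

theorem exists_skewB_calBeta_conj_eq (hJ : IsGCS V J) (hJ' : IsGCS V J')
    (h1 : blk1 V J = blk1 V J') (h3 : blk3 V J = blk3 V J') (h4 : blk4 V J = blk4 V J') :
    ∃ β : Dual ℝ V →ₗ[ℝ] V, SkewB V β ∧ calBeta V β ∘ₗ J ∘ₗ calBeta V (-β) = J' ∧
      SkewB V (blk1 V J ∘ₗ β) := by
  have hδC := hJ.blk2_sub_comp_blk3 hJ' h1 h3
  have hCδ := hJ.blk3_comp_blk2_sub hJ' h3 h4
  have hAδ := hJ.blk1_comp_blk2_sub hJ' h1 h4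
  have hδ : SkewB V (blk2 V J' - blk2 V J) := hJ'.skewB_blk2.sub hJ.skewB_blk2
  obtain ⟨-, -, hCA, hCB⟩ := hJ.blk_comp_blk
  have hD := hJ.blk4_eq_neg_dualMap
  rw [hD, neg_comp] at hCA
  rw [hD, neg_comp, comp_neg] at hCB
  set A := blk1 V J
  set C := blk3 V J
  set δ := blk2 V J' - blk2 V J
  have hA'C : A.dualMap ∘ₗ C = C ∘ₗ A := by
    rw [← sub_zero (C ∘ₗ A), ← hCA]
    abel
  have hA'A' : A.dualMap ∘ₗ A.dualMap = -LinearMap.id - C ∘ₗ blk2 V J := by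
    rw [← hCB]
    abel
  have hδA'A' : δ ∘ₗ A.dualMap ∘ₗ A.dualMap = -δ := by
    rw [hA'A', comp_sub, ← comp_assoc, hδC, zero_comp, sub_zero, comp_neg, comp_id]
  have hAβ : A ∘ₗ ((1/2 : ℝ) • δ ∘ₗ A.dualMap) = -(1/2 : ℝ) • δ := by
    rw [comp_smul, ← comp_assoc, hAδ, comp_assoc, hδA'A', smul_neg, neg_smul]
  refine ⟨(1/2 : ℝ) • δ ∘ₗ A.dualMap, (hδ.comp_dualMap hAδ).smul _,
    (calBeta_comp_comp_calBeta_neg_eq_iff h1 h3 h4 _).2 ⟨?_, ?_, ?_⟩, hAβ ▸ hδ.smul _⟩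
  · rw [smul_comp, comp_assoc, hA'C, ← comp_assoc, hδC, zero_comp, smul_zero]
  · rw [comp_smul, ← comp_assoc, hCδ, zero_comp, smul_zero]
  · rw [hAβ, hD, smul_comp, comp_neg, comp_assoc, hδA'A']
    module

theorem eq_zero_of_skewB (hJ : IsGCS V J) {γ : Dual ℝ V →ₗ[ℝ] V} (hγ : SkewB V γ)
    (hAγ : SkewB V (blk1 V J ∘ₗ γ)) (hCγ : blk3 V J ∘ₗ γ = 0)
    (hγD : γ ∘ₗ blk4 V J = blk1 V J ∘ₗ γ) : γ = 0 := by
  have hsymm (f g : Dual ℝ V) : f (blk1 V J (γ g)) = g (blk1 V J (γ f)) :=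
    calc f (blk1 V J (γ g)) = f (γ (blk4 V J g)) := congr_arg f (LinearMap.congr_fun hγD g).symm
      _ = -(blk4 V J g) (γ f) := hγ f _
      _ = g (blk1 V J (γ f)) := by simp [hJ.blk4_eq_neg_dualMap]
  have hAγ0 : blk1 V J ∘ₗ γ = 0 := LinearMap.ext fun f => by
    refine (forall_dual_apply_eq_zero_iff ℝ _).1 fun g => ?_
    have := hAγ g f
    rw [comp_apply, comp_apply, hsymm f g] at this
    rw [comp_apply]
    linarith
  obtain ⟨hAA, -⟩ := hJ.blk_comp_blk
  calc γ = -((blk1 V J ∘ₗ blk1 V J + blk2 V J ∘ₗ blk3 V J) ∘ₗ γ) := by rw [hAA]; simp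
    _ = -(blk1 V J ∘ₗ (blk1 V J ∘ₗ γ) + blk2 V J ∘ₗ (blk3 V J ∘ₗ γ)) := by
      rw [add_comp, comp_assoc, comp_assoc]
    _ = 0 := by rw [hAγ0, hCγ]; simp

theorem eq_of_calBeta_conj_eq (hJ : IsGCS V J) (h1 : blk1 V J = blk1 V J')
    (h3 : blk3 V J = blk3 V J') (h4 : blk4 V J = blk4 V J') {β β' : Dual ℝ V →ₗ[ℝ] V}
    (hβ : SkewB V β) (hconj : calBeta V β ∘ₗ J ∘ₗ calBeta V (-β) = J')
    (hAβ : SkewB V (blk1 V J ∘ₗ β)) (hβ' : SkewB V β')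
    (hconj' : calBeta V β' ∘ₗ J ∘ₗ calBeta V (-β') = J') (hAβ' : SkewB V (blk1 V J ∘ₗ β')) :
    β = β' := by
  obtain ⟨-, hCβ, hβD⟩ := (calBeta_comp_comp_calBeta_neg_eq_iff h1 h3 h4 β).1 hconj
  obtain ⟨-, hCβ', hβD'⟩ := (calBeta_comp_comp_calBeta_neg_eq_iff h1 h3 h4 β').1 hconj'
  refine sub_eq_zero.1 (hJ.eq_zero_of_skewB (hβ.sub hβ') ?_ ?_ ?_)
  · rw [comp_sub]
    exact hAβ.sub hAβ'
  · rw [comp_sub, hCβ, hCβ']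
    abel
  · rw [sub_comp, comp_sub]
    linear_combination (norm := module) hβD - hβD'

end IsGCS

theorem exists_beta_transform_of_eq_blocks_134_general
    (V : Type*) [AddCommGroup V] [Module ℝ V]
    (J J' : (V × Module.Dual ℝ V) →ₗ[ℝ] (V × Module.Dual ℝ V))
    (hJ : IsGCS V J) (hJ' : IsGCS V J')
    (h1 : blk1 V J = blk1 V J') (h3 : blk3 V J = blk3 V J') (h4 : blk4 V J = blk4 V J') :
    (∃ β : Module.Dual ℝ V →ₗ[ℝ] V, SkewB V β ∧
        calBeta V β ∘ₗ J ∘ₗ calBeta V (-β) = J') ∧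
    (∃! β : Module.Dual ℝ V →ₗ[ℝ] V, SkewB V β ∧
        calBeta V β ∘ₗ J ∘ₗ calBeta V (-β) = J' ∧ SkewB V (blk1 V J ∘ₗ β)) := by
  obtain ⟨β, hβ, hconj, hAβ⟩ := hJ.exists_skewB_calBeta_conj_eq hJ' h1 h3 h4
  exact ⟨⟨β, hβ, hconj⟩, β, ⟨hβ, hconj, hAβ⟩, fun β' ⟨hβ', hconj', hAβ'⟩ =>
    hJ.eq_of_calBeta_conj_eq h1 h3 h4 hβ' hconj' hAβ' hβ hconj hAβ⟩

theorem exists_beta_transform_of_eq_blocks_134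
    (V : Type*) [AddCommGroup V] [Module ℝ V] [FiniteDimensional ℝ V]
    (J J' : (V × Module.Dual ℝ V) →ₗ[ℝ] (V × Module.Dual ℝ V))
    (hJ : IsGCS V J) (hJ' : IsGCS V J')
    (h1 : blk1 V J = blk1 V J') (h3 : blk3 V J = blk3 V J') (h4 : blk4 V J = blk4 V J') :
    (∃ β : Module.Dual ℝ V →ₗ[ℝ] V, SkewB V β ∧
        calBeta V β ∘ₗ J ∘ₗ calBeta V (-β) = J') ∧
    (∃! β : Module.Dual ℝ V →ₗ[ℝ] V, SkewB V β ∧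
        calBeta V β ∘ₗ J ∘ₗ calBeta V (-β) = J' ∧ SkewB V (blk1 V J ∘ₗ β)) :=
  exists_beta_transform_of_eq_blocks_134_general V J J' hJ hJ' h1 h3 h4
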